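/- arXiv:2109.11006 — 5 statements merged into one kernel-verified Lean document; each statement's English description precedes it below -/
import Mathlib

section
/- Let W: ℝ/ℤ → (-∞,∞] be even, integrable, continuous away from 0, with W(0) = ∞ and W twice differentiable with W'' > 0 on (0,1). Then for every nonzero integer k, the Fourier coefficient Ŵ(k) = ∫₀¹ (W(x) - inf W) e^{-2πikx} dx is strictly positive. -/
open MeasureTheory intervalIntegral Set Real

lemma convex_ineq {L : ℝ} (hL : 0 < L) {g : ℝ → ℝ}
    (hg : StrictConvexOn ℝ (Set.Ioo 0 L) g) {u : ℝ} (hu : u ∈ Set.Ioo 0 (L/4)) :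
    0 < g u + g (L - u) - g (L/2 - u) - g (L/2 + u) := by
  obtain ⟨hu0, hu4⟩ := hu
  set lam : ℝ := (L/2) / (L - 2*u) with hlam
  have hden : 0 < L - 2*u := by linarith
  have hlam0 : 0 < lam := by positivity
  have hmu0 : 0 < 1 - lam := by
    rw [hlam, sub_pos, div_lt_one hden]; linarith
  have hx : u ∈ Set.Ioo 0 L := ⟨hu0, by linarith⟩
  have hy : L - u ∈ Set.Ioo 0 L := ⟨by linarith, by linarith⟩
  have hne : u ≠ L - u := by intro h; nlinarith
  have h1 := hg.2 hx hy hne hlam0 hmu0 (by ring)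
  have h2 := hg.2 hx hy hne hmu0 hlam0 (by ring)
  rw [smul_eq_mul, smul_eq_mul, smul_eq_mul, smul_eq_mul] at h1 h2
  have e1 : lam * u + (1-lam) * (L - u) = L/2 - u := by
    rw [hlam]; field_simp; ring
  have e2 : (1-lam) * u + lam * (L - u) = L/2 + u := by
    rw [hlam]; field_simp; ring
  rw [e1] at h1
  rw [e2] at h2
  linarith

lemma inner_pos {L : ℝ} (hL : 0 < L) {g : ℝ → ℝ}
    (hg : StrictConvexOn ℝ (Set.Ioo 0 L) g)
    (hgi : IntervalIntegrable g volume 0 L) :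
    0 < ∫ t in (0:ℝ)..L, g t * Real.cos (2*π/L*t) := by
  set f : ℝ → ℝ := fun t => g t * Real.cos (2*π/L*t) with hf
  have hfi : IntervalIntegrable f volume 0 L :=
    hgi.mul_continuousOn (Continuous.continuousOn (by continuity))
  have hsub : ∀ c d : ℝ, 0 ≤ c → c ≤ d → d ≤ L → IntervalIntegrable f volume c d := by
    intro c d h0 hcd hdL
    refine hfi.mono_set ?_
    rw [Set.uIcc_of_le (by linarith), Set.uIcc_of_le (by linarith)]
    exact Set.Icc_subset_Icc (by linarith) (by linarith)
  -- integrability of composed pieces on [0, L/4]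
  have hi1 : IntervalIntegrable f volume 0 (L/4) := hsub _ _ le_rfl (by linarith) (by linarith)
  have hi2 : IntervalIntegrable (fun u => f (L/2 - u)) volume 0 (L/4) := by
    have h := (hsub (L/4) (L/2) (by linarith) (by linarith) (by linarith)).comp_sub_left (L/2)
    rw [show L/2 - L/4 = L/4 by ring, show L/2 - L/2 = (0:ℝ) by ring] at h
    exact h.symm
  have hi3 : IntervalIntegrable (fun u => f (L/2 + u)) volume 0 (L/4) := by
    have h := (hsub (L/2) (3*L/4) (by linarith) (by linarith) (by linarith)).comp_add_left (L/2)
    rw [show L/2 - L/2 = (0:ℝ) by ring, show 3*L/4 - L/2 = L/4 by ring] at h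
    exact h
  have hi4 : IntervalIntegrable (fun u => f (L - u)) volume 0 (L/4) := by
    have h := (hsub (3*L/4) L (by linarith) (by linarith) (by linarith)).comp_sub_left L
    rw [show L - 3*L/4 = L/4 by ring, show L - L = (0:ℝ) by ring] at h
    exact h.symm
  -- split the integral
  have split : ∫ t in (0:ℝ)..L, f t
      = (∫ t in (0:ℝ)..(L/4), f t) + (∫ t in (L/4)..(L/2), f t)
        + (∫ t in (L/2)..(3*L/4), f t) + (∫ t in (3*L/4)..L, f t) := by
    rw [integral_add_adjacent_intervals (hsub 0 (L/4) le_rfl (by linarith) (by linarith))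
      (hsub (L/4) (L/2) (by linarith) (by linarith) (by linarith)),
      integral_add_adjacent_intervals (hsub 0 (L/2) le_rfl (by linarith) (by linarith))
      (hsub (L/2) (3*L/4) (by linarith) (by linarith) (by linarith)),
      integral_add_adjacent_intervals (hsub 0 (3*L/4) le_rfl (by linarith) (by linarith))
      (hsub (3*L/4) L (by linarith) (by linarith) (by linarith))]
  have e2 : (∫ t in (L/4)..(L/2), f t) = ∫ u in (0:ℝ)..(L/4), f (L/2 - u) := by
    rw [intervalIntegral.integral_comp_sub_left f (L/2),
      show L/2 - L/4 = L/4 by ring, show L/2 - (0:ℝ) = L/2 by ring]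
  have e3 : (∫ t in (L/2)..(3*L/4), f t) = ∫ u in (0:ℝ)..(L/4), f (u + L/2) := by
    rw [intervalIntegral.integral_comp_add_right f (L/2),
      show (0:ℝ) + L/2 = L/2 by ring, show L/4 + L/2 = 3*L/4 by ring]
  have e4 : (∫ t in (3*L/4)..L, f t) = ∫ u in (0:ℝ)..(L/4), f (L - u) := by
    rw [intervalIntegral.integral_comp_sub_left f L,
      show L - L/4 = 3*L/4 by ring, show L - (0:ℝ) = L by ring]
  have hi3' : IntervalIntegrable (fun u => f (u + L/2)) volume 0 (L/4) := by
    simpa [add_comm] using hi3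
  have comb : ∫ t in (0:ℝ)..L, f t
      = ∫ u in (0:ℝ)..(L/4), (f u + f (L/2 - u) + f (u + L/2) + f (L - u)) := by
    rw [split, e2, e3, e4,
      ← integral_add hi1 hi2, ← integral_add (hi1.add hi2) hi3',
      ← integral_add ((hi1.add hi2).add hi3') hi4]
  rw [comb]
  apply intervalIntegral_pos_of_pos_on
  · exact ((hi1.add hi2).add hi3').add hi4
  · intro u hu
    obtain ⟨hu0, hu4⟩ := hu
    have hLne : L ≠ 0 := hL.ne'
    have c2 : Real.cos (2*π/L*(L/2 - u)) = -Real.cos (2*π/L*u) := by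
      rw [show 2*π/L*(L/2 - u) = π - 2*π/L*u by field_simp, Real.cos_pi_sub]
    have c3 : Real.cos (2*π/L*(u + L/2)) = -Real.cos (2*π/L*u) := by
      rw [show 2*π/L*(u + L/2) = 2*π/L*u + π by field_simp, Real.cos_add_pi]
    have c4 : Real.cos (2*π/L*(L - u)) = Real.cos (2*π/L*u) := by
      rw [show 2*π/L*(L - u) = 2*π - 2*π/L*u by field_simp, Real.cos_sub,
        Real.cos_two_pi, Real.sin_two_pi]
      ring
    have key : f u + f (L/2 - u) + f (u + L/2) + f (L - u)
        = (g u + g (L - u) - g (L/2 - u) - g (L/2 + u)) * Real.cos (2*π/L*u) := by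
      simp only [hf, c2, c3, c4]
      rw [show u + L/2 = L/2 + u by ring]
      ring
    rw [key]
    apply mul_pos (convex_ineq hL hg ⟨hu0, hu4⟩)
    apply Real.cos_pos_of_mem_Ioo
    constructor
    · have : 0 < 2*π/L*u := by positivity
      linarith [Real.pi_pos]
    · have h1 : 2*π/L*u < 2*π/L*(L/4) := by
        apply mul_lt_mul_of_pos_left hu4
        positivity
      have h2 : 2*π/L*(L/4) = π/2 := by field_simp; ring
      linarith
  · linarith

lemma real_coeff_pos {W : ℝ → ℝ}
    (hint : IntervalIntegrable W volume 0 1)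
    (hW : StrictConvexOn ℝ (Set.Ioo 0 1) W)
    (n : ℕ) (hn : 0 < n) :
    0 < ∫ x in (0:ℝ)..1, W x * Real.cos (2*π*n*x) := by
  have hn0 : (0:ℝ) < n := by exact_mod_cast hn
  have hnne : (n:ℝ) ≠ 0 := hn0.ne'
  set F : ℝ → ℝ := fun x => W x * Real.cos (2*π*n*x) with hF
  have hFi : IntervalIntegrable F volume 0 1 :=
    hint.mul_continuousOn (Continuous.continuousOn (by continuity))
  have hWsub : ∀ c d : ℝ, 0 ≤ c → c ≤ d → d ≤ 1 → IntervalIntegrable W volume c d := by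
    intro c d h0 hcd hdL
    refine hint.mono_set ?_
    rw [Set.uIcc_of_le (by linarith), Set.uIcc_of_le (by linarith)]
    exact Set.Icc_subset_Icc (by linarith) (by linarith)
  have hFsub : ∀ c d : ℝ, 0 ≤ c → c ≤ d → d ≤ 1 → IntervalIntegrable F volume c d := by
    intro c d h0 hcd hdL
    exact (hWsub c d h0 hcd hdL).mul_continuousOn (Continuous.continuousOn (by continuity))
  have hjle : ∀ j : ℕ, j < n → ((j:ℝ)/n ≥ 0 ∧ (j:ℝ)/n ≤ 1 ∧ ((j:ℝ)+1)/n ≤ 1 ∧ (j:ℝ)/n ≤ ((j:ℝ)+1)/n) := by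
    intro j hj
    have hj' : (j:ℝ) + 1 ≤ n := by exact_mod_cast hj
    have hjnn : (0:ℝ) ≤ j := Nat.cast_nonneg j
    refine ⟨by positivity, ?_, ?_, ?_⟩
    · rw [div_le_one hn0]; linarith
    · rw [div_le_one hn0]; linarith
    · gcongr <;> linarith
  -- sum over subintervals
  have hsum := intervalIntegral.sum_integral_adjacent_intervals
    (f := F) (μ := volume) (a := fun j : ℕ => (j:ℝ)/n) (n := n) ?_
  · have ha0 : ((0:ℕ):ℝ)/n = 0 := by simp
    have han : ((n:ℕ):ℝ)/n = 1 := by field_simp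
    rw [ha0, han] at hsum
    rw [← hsum]
    apply Finset.sum_pos ?_ (by simp [Finset.nonempty_range_iff]; omega)
    intro j hj
    have hj' := Finset.mem_range.mp hj
    obtain ⟨hjp1, hjp2, hjp3, hjp4⟩ := hjle j hj'
    -- translate to [0, 1/n]
    have etrans : (∫ x in ((j:ℝ)/n)..(((j:ℝ)+1)/n), F x)
        = ∫ t in (0:ℝ)..(1/n), F (t + (j:ℝ)/n) := by
      rw [intervalIntegral.integral_comp_add_right F ((j:ℝ)/n),
        show (0:ℝ) + (j:ℝ)/n = (j:ℝ)/n by ring,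
        show 1/(n:ℝ) + (j:ℝ)/n = ((j:ℝ)+1)/n by field_simp; ring]
    push_cast
    rw [etrans]
    have econg : (∫ t in (0:ℝ)..(1/n), F (t + (j:ℝ)/n))
        = ∫ t in (0:ℝ)..(1/n), W (t + (j:ℝ)/n) * Real.cos (2*π/(1/n)*t) := by
      apply intervalIntegral.integral_congr
      intro t _
      simp only [hF]
      congr 1
      rw [show 2*π*(n:ℝ)*(t + (j:ℝ)/n) = 2*π/(1/n)*t + (j:ℕ) * (2*π) by field_simp]
      exact (Real.cos_periodic.nat_mul j) (2*π/(1/(n:ℝ))*t)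
    rw [econg]
    apply inner_pos (by positivity)
    · constructor
      · exact convex_Ioo 0 (1/(n:ℝ))
      · intro x hx y hy hxy a b ha hb hab
        have hx' : x + (j:ℝ)/n ∈ Set.Ioo (0:ℝ) 1 := by
          constructor
          · have := hx.1; positivity
          · have h2 := hx.2
            have : x + (j:ℝ)/n < 1/n + (j:ℝ)/n := by linarith
            calc x + (j:ℝ)/n < 1/n + (j:ℝ)/n := this
              _ = ((j:ℝ)+1)/n := by field_simp; ring
              _ ≤ 1 := hjp3
        have hy' : y + (j:ℝ)/n ∈ Set.Ioo (0:ℝ) 1 := by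
          constructor
          · have := hy.1; positivity
          · have h2 := hy.2
            calc y + (j:ℝ)/n < 1/n + (j:ℝ)/n := by linarith
              _ = ((j:ℝ)+1)/n := by field_simp; ring
              _ ≤ 1 := hjp3
        have hne : x + (j:ℝ)/n ≠ y + (j:ℝ)/n := by
          intro h; exact hxy (by linarith [add_right_cancel h])
        have hthis := hW.2 hx' hy' hne ha hb hab
        simp only [smul_eq_mul] at hthis ⊢
        have e : a * (x + (j:ℝ)/n) + b * (y + (j:ℝ)/n) = a * x + b * y + (j:ℝ)/n := by
          linear_combination ((j:ℝ)/n) * hab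
        rw [e] at hthis
        exact hthis
      -- done convexity
    · have h := (hWsub ((j:ℝ)/n) (((j:ℝ)+1)/n) hjp1 hjp4 hjp3).comp_add_right ((j:ℝ)/n)
      rw [show (j:ℝ)/n - (j:ℝ)/n = 0 by ring,
        show ((j:ℝ)+1)/n - (j:ℝ)/n = 1/n by field_simp; ring] at h
      exact h
  · intro j hj
    obtain ⟨hjp1, hjp2, hjp3, hjp4⟩ := hjle j hj
    have e : ((j+1:ℕ):ℝ)/n = ((j:ℝ)+1)/n := by push_cast; ring
    rw [e]
    exact hFsub _ _ hjp1 hjp4 hjp3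

/-- If `W` is periodic with period 1, even, integrable on one period, continuous away
from `0`, blows up to `∞` at `0`, and is twice differentiable with strictly positive
second derivative on `(0,1)`, then for every nonzero integer `k` the Fourier coefficient
`∫₀¹ (W(x) - inf W) e^{-2πikx} dx` is a strictly positive real number. -/
theorem fourier_coeff_pos_of_convex (W : ℝ → ℝ)
    (hper : Function.Periodic W 1)
    (heven : ∀ x, W (-x) = W x)
    (hint : IntervalIntegrable W MeasureTheory.volume 0 1)
    (hcont : ContinuousOn W (Set.Ioo 0 1))
    (hblow : Filter.Tendsto W (nhdsWithin 0 {x | x ≠ 0}) Filter.atTop)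
    (hdiff : ∀ x ∈ Set.Ioo (0:ℝ) 1, DifferentiableAt ℝ W x ∧ DifferentiableAt ℝ (deriv W) x)
    (hconv : ∀ x ∈ Set.Ioo (0:ℝ) 1, 0 < deriv (deriv W) x)
    (k : ℤ) (hk : k ≠ 0) :
    ∃ c : ℝ, 0 < c ∧
      (∫ x in (0:ℝ)..1, ((W x - sInf (W '' Set.Ioo 0 1) : ℝ) : ℂ) *
          Complex.exp (-2 * Real.pi * Complex.I * k * x)) = (c : ℂ) := by
  set m : ℝ := sInf (W '' Set.Ioo 0 1) with hm
  set n : ℕ := k.natAbs with hn'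
  have hn : 0 < n := Int.natAbs_pos.mpr hk
  -- strict convexity
  have hW : StrictConvexOn ℝ (Set.Ioo 0 1) W := by
    apply strictConvexOn_of_deriv2_pos (convex_Ioo 0 1) hcont
    intro x hx
    rw [interior_Ioo] at hx
    have : deriv^[2] W x = deriv (deriv W) x := by
      simp [Function.iterate_succ, Function.iterate_zero, Function.comp]
    rw [this]
    exact hconv x hx
  set c : ℝ := ∫ x in (0:ℝ)..1, W x * Real.cos (2*π*n*x) with hc
  have hcpos : 0 < c := real_coeff_pos hint hW n hn
  refine ⟨c, hcpos, ?_⟩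
  -- |k| relation
  have hkabs : ((k:ℝ) = (n:ℝ)) ∨ ((k:ℝ) = -(n:ℝ)) := by
    have hnabs : (n:ℝ) = |(k:ℝ)| := by
      rw [hn', Nat.cast_natAbs]
      exact_mod_cast rfl
    rcases abs_cases (k:ℝ) with ⟨h1, _⟩ | ⟨h1, _⟩
    · left; rw [hnabs, h1]
    · right; rw [hnabs, h1]; ring
  have hcoskn : ∀ x : ℝ, Real.cos (2*π*(k:ℝ)*x) = Real.cos (2*π*(n:ℝ)*x) := by
    intro x
    rcases hkabs with h | h <;> rw [h]
    rw [show 2*π*(-(n:ℝ))*x = -(2*π*(n:ℝ)*x) by ring, Real.cos_neg]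
  -- components
  set u : ℝ → ℝ := fun x => (W x - m) * Real.cos (2*π*(k:ℝ)*x) with hu
  set v : ℝ → ℝ := fun x => -((W x - m) * Real.sin (2*π*(k:ℝ)*x)) with hv
  have hWm : IntervalIntegrable (fun x => W x - m) volume 0 1 :=
    hint.sub intervalIntegrable_const
  have hui : IntervalIntegrable u volume 0 1 :=
    hWm.mul_continuousOn (Continuous.continuousOn (by fun_prop))
  have hvi : IntervalIntegrable v volume 0 1 :=
    (hWm.mul_continuousOn (Continuous.continuousOn (by fun_prop))).neg
  -- pointwise decomposition
  have hpt : ∀ x : ℝ, ((W x - m : ℝ) : ℂ) * Complex.exp (-2 * Real.pi * Complex.I * k * x)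
      = ((u x : ℝ) : ℂ) + ((v x : ℝ) : ℂ) * Complex.I := by
    intro x
    rw [show (-2 * (Real.pi:ℂ) * Complex.I * (k:ℂ) * (x:ℂ))
        = ((-(2*π*(k:ℝ)*x) : ℝ) : ℂ) * Complex.I by push_cast; ring,
      Complex.exp_mul_I, ← Complex.ofReal_cos, ← Complex.ofReal_sin,
      Real.cos_neg, Real.sin_neg]
    simp only [hu, hv]
    push_cast
    ring
  rw [intervalIntegral.integral_congr (fun x _ => hpt x)]
  have huic : IntervalIntegrable (fun x => ((u x : ℝ) : ℂ)) volume 0 1 :=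
    ⟨hui.1.ofReal, hui.2.ofReal⟩
  have hvic : IntervalIntegrable (fun x => ((v x : ℝ) : ℂ) * Complex.I) volume 0 1 :=
    ⟨(hvi.1.ofReal).mul_const _, (hvi.2.ofReal).mul_const _⟩
  rw [intervalIntegral.integral_add huic hvic, intervalIntegral.integral_mul_const,
    intervalIntegral.integral_ofReal, intervalIntegral.integral_ofReal]
  -- basic trig integrals
  have hcos0 : (∫ x in (0:ℝ)..1, Real.cos (2*π*(k:ℝ)*x)) = 0 := by
    have hc2 : (2*π*(k:ℝ)) ≠ 0 := by
      have : (k:ℝ) ≠ 0 := Int.cast_ne_zero.mpr hk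
      positivity
    rw [intervalIntegral.integral_comp_mul_left Real.cos hc2]
    simp only [mul_zero, mul_one]
    rw [integral_cos, show 2*π*(k:ℝ) = ((2*k : ℤ):ℝ)*π by push_cast; ring,
      Real.sin_int_mul_pi]
    simp
  have hkne : (k:ℝ) ≠ 0 := Int.cast_ne_zero.mpr hk
  have hc2 : (2*π*(k:ℝ)) ≠ 0 := by positivity
  have hsin0 : (∫ x in (0:ℝ)..1, Real.sin (2*π*(k:ℝ)*x)) = 0 := by
    rw [intervalIntegral.integral_comp_mul_left Real.sin hc2]
    simp only [mul_zero, mul_one]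
    rw [integral_sin, Real.cos_zero, show 2*π*(k:ℝ) = (k:ℝ)*(2*π) by ring]
    rw [show ((k:ℝ)) = ((k:ℤ):ℝ) by norm_cast, Real.cos_int_mul_two_pi]
    simp
  set S : ℝ → ℝ := fun x => W x * Real.sin (2*π*(k:ℝ)*x) with hS
  have hSi : IntervalIntegrable S volume 0 1 :=
    hint.mul_continuousOn (Continuous.continuousOn (by fun_prop))
  have hWsin0 : (∫ x in (0:ℝ)..1, S x) = 0 := by
    have hrefl := intervalIntegral.integral_comp_sub_left (a := (0:ℝ)) (b := 1) S 1
    rw [show (1:ℝ) - 1 = 0 by ring, show (1:ℝ) - 0 = 1 by ring] at hrefl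
    have hcong : (∫ x in (0:ℝ)..1, S (1-x)) = ∫ x in (0:ℝ)..1, -(S x) := by
      apply intervalIntegral.integral_congr
      intro x _
      have h1 : W (1 - x) = W x := by
        have hp := hper (-x)
        rw [show (1:ℝ) - x = -x + 1 by ring, hp, heven]
      have h2 : Real.sin (2*π*(k:ℝ)*(1-x)) = -Real.sin (2*π*(k:ℝ)*x) := by
        rw [show 2*π*(k:ℝ)*(1-x) = -(2*π*(k:ℝ)*x) + (k:ℤ)*(2*π) by push_cast; ring,
          Real.sin_add_int_mul_two_pi, Real.sin_neg]
      simp only [hS]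
      rw [h1, h2]
      ring
    rw [hcong, intervalIntegral.integral_neg] at hrefl
    linarith
  -- imaginary part vanishes
  have hv0 : (∫ x in (0:ℝ)..1, v x) = 0 := by
    have hT : IntervalIntegrable (fun x => m * Real.sin (2*π*(k:ℝ)*x)) volume 0 1 :=
      (Continuous.intervalIntegrable (by fun_prop) 0 1)
    have e : (∫ x in (0:ℝ)..1, v x)
        = ∫ x in (0:ℝ)..1, (m * Real.sin (2*π*(k:ℝ)*x) - S x) := by
      apply intervalIntegral.integral_congr
      intro x _
      simp only [hv, hS]
      ring
    rw [e, intervalIntegral.integral_sub hT hSi, hWsin0,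
      intervalIntegral.integral_const_mul, hsin0]
    ring
  -- real part equals c
  have hu0 : (∫ x in (0:ℝ)..1, u x) = c := by
    have e : (∫ x in (0:ℝ)..1, u x)
        = ∫ x in (0:ℝ)..1, (W x * Real.cos (2*π*(n:ℝ)*x) - m * Real.cos (2*π*(k:ℝ)*x)) := by
      apply intervalIntegral.integral_congr
      intro x _
      simp only [hu]
      rw [← hcoskn x]
      ring
    have hT : IntervalIntegrable (fun x => m * Real.cos (2*π*(k:ℝ)*x)) volume 0 1 :=
      (Continuous.intervalIntegrable (by fun_prop) 0 1)
    rw [e, intervalIntegral.integral_sub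
        (hint.mul_continuousOn (Continuous.continuousOn (by fun_prop))) hT,
      intervalIntegral.integral_const_mul, hcos0, hc]
    ring
  rw [hu0, hv0]
  simp
end

section
/- Let ρₙ be Borel probability measures on 𝕋 = ℝ/ℤ converging weakly to ρ. Then 𝒟[ρₙ] → 𝒟[ρ], where 𝒟[μ] = sup over closed intervals I of (μ(I) - |I|). -/
open MeasureTheory

/-- The discrepancy of a measure on the torus `ℝ/ℤ` from the uniform measure. -/
noncomputable def discrepancy (ρ : Measure (AddCircle (1 : ℝ))) : ℝ :=
  sSup {r : ℝ | ∃ a b : ℝ, a ≤ b ∧ b ≤ a + 1 ∧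
    r = (ρ ((fun x : ℝ => (x : AddCircle (1 : ℝ))) '' Set.Icc a b)).toReal - (b - a)}

open Metric in
lemma img_measurable {a b : ℝ} :
    MeasurableSet ((fun x : ℝ => (x : AddCircle (1 : ℝ))) '' Set.Icc a b) :=
  ((isCompact_Icc.image (AddCircle.continuous_mk' 1)).isClosed).measurableSet

lemma thick_sub {a b δ : ℝ} (hδ : 0 < δ) :
    Metric.thickening δ ((fun x : ℝ => (x : AddCircle (1 : ℝ))) '' Set.Icc a b)
      ⊆ (fun x : ℝ => (x : AddCircle (1 : ℝ))) '' Set.Icc (a - δ) (b + δ) := by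
  intro y hy
  rw [Metric.mem_thickening_iff] at hy
  obtain ⟨z, hz, hdist⟩ := hy
  obtain ⟨x, hx, rfl⟩ := hz
  obtain ⟨t, rfl⟩ := QuotientAddGroup.mk_surjective y
  have hnorm : dist ((t : AddCircle (1:ℝ))) ((x : AddCircle (1:ℝ)))
      = |(t - x) - round (t - x)| := by
    rw [dist_eq_norm, ← AddCircle.coe_sub, AddCircle.norm_eq]
    simp
  rw [hnorm] at hdist
  have habs := abs_lt.mp hdist
  refine ⟨t - round (t - x), ⟨by push_cast; cases hx; linarith, by push_cast; cases hx; linarith⟩, ?_⟩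
  have : ((round (t - x) : ℝ) : AddCircle (1:ℝ)) = 0 := by
    rw [AddCircle.coe_eq_zero_iff]
    exact ⟨round (t - x), by simp⟩
  push_cast
  rw [AddCircle.coe_sub, this, sub_zero]


lemma discSet_nonempty (ρ : Measure (AddCircle (1 : ℝ))) :
    {r : ℝ | ∃ a b : ℝ, a ≤ b ∧ b ≤ a + 1 ∧
      r = (ρ ((fun x : ℝ => (x : AddCircle (1 : ℝ))) '' Set.Icc a b)).toReal - (b - a)}.Nonempty :=
  ⟨_, 0, 0, le_refl 0, by norm_num, rfl⟩

lemma discSet_bddAbove (ρ : Measure (AddCircle (1 : ℝ))) [IsProbabilityMeasure ρ] :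
    BddAbove {r : ℝ | ∃ a b : ℝ, a ≤ b ∧ b ≤ a + 1 ∧
      r = (ρ ((fun x : ℝ => (x : AddCircle (1 : ℝ))) '' Set.Icc a b)).toReal - (b - a)} := by
  refine ⟨1, fun r hr => ?_⟩
  obtain ⟨a, b, hab, _, rfl⟩ := hr
  have h1 : (ρ ((fun x : ℝ => (x : AddCircle (1 : ℝ))) '' Set.Icc a b)).toReal ≤ 1 := by
    have := ENNReal.toReal_mono ENNReal.one_ne_top (prob_le_one (μ := ρ)
      (s := (fun x : ℝ => (x : AddCircle (1 : ℝ))) '' Set.Icc a b))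
    simpa using this
  linarith


lemma discrepancy_nonneg' (ρ : Measure (AddCircle (1 : ℝ))) [IsProbabilityMeasure ρ] :
    0 ≤ discrepancy ρ := by
  have hmem : ((ρ ((fun x : ℝ => (x : AddCircle (1 : ℝ))) '' Set.Icc 0 0)).toReal - (0 - 0)) ∈
      {r : ℝ | ∃ a b : ℝ, a ≤ b ∧ b ≤ a + 1 ∧
      r = (ρ ((fun x : ℝ => (x : AddCircle (1 : ℝ))) '' Set.Icc a b)).toReal - (b - a)} :=
    ⟨0, 0, le_refl 0, by norm_num, rfl⟩
  have := le_csSup (discSet_bddAbove ρ) hmem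
  have h0 : (0:ℝ) ≤ (ρ ((fun x : ℝ => (x : AddCircle (1 : ℝ))) '' Set.Icc 0 0)).toReal - (0 - 0) := by
    simp [ENNReal.toReal_nonneg]
  exact le_trans h0 this

lemma discrepancy_le_of_thickening (μ ν : Measure (AddCircle (1 : ℝ)))
    [IsProbabilityMeasure μ] [IsProbabilityMeasure ν] {δ : ℝ} (hδ : 0 < δ)
    (h : ∀ B : Set (AddCircle (1 : ℝ)), MeasurableSet B →
      μ B ≤ ν (Metric.thickening δ B) + ENNReal.ofReal δ) :
    discrepancy μ ≤ discrepancy ν + 3 * δ := by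
  refine csSup_le (discSet_nonempty μ) ?_
  rintro r ⟨a, b, hab, hba, rfl⟩
  set I := (fun x : ℝ => (x : AddCircle (1 : ℝ))) '' Set.Icc a b with hI
  by_cases hcase : b + δ ≤ (a - δ) + 1
  · set I' := (fun x : ℝ => (x : AddCircle (1 : ℝ))) '' Set.Icc (a - δ) (b + δ) with hI'
    have h3 : μ I ≤ ν I' + ENNReal.ofReal δ := by
      refine (h I img_measurable).trans (add_le_add_left (measure_mono ?_) _)
      exact thick_sub hδ
    have h4 : (μ I).toReal ≤ (ν I').toReal + δ := by
      have := ENNReal.toReal_mono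
        (by finiteness) h3
      rwa [ENNReal.toReal_add (measure_ne_top _ _) ENNReal.ofReal_ne_top,
        ENNReal.toReal_ofReal hδ.le] at this
    have h5 : (ν I').toReal - ((b + δ) - (a - δ)) ≤ discrepancy ν :=
      le_csSup (discSet_bddAbove ν) ⟨a - δ, b + δ, by linarith, hcase, rfl⟩
    linarith
  · have h1 : (μ I).toReal ≤ 1 := by
      have := ENNReal.toReal_mono ENNReal.one_ne_top (prob_le_one (μ := μ) (s := I))
      simpa using this
    have h0 := discrepancy_nonneg' ν
    push_neg at hcase
    linarith


open scoped Topology in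
/-- If probability measures `ρₙ` on the torus converge weakly to `ρ`, then the
discrepancies converge: `𝒟[ρₙ] → 𝒟[ρ]`. -/
theorem discrepancy_tendsto_of_weak_conv
    (ρseq : ℕ → Measure (AddCircle (1 : ℝ))) [∀ n, IsProbabilityMeasure (ρseq n)]
    (ρ : Measure (AddCircle (1 : ℝ))) [IsProbabilityMeasure ρ]
    (hweak : ∀ f : C(AddCircle (1 : ℝ), ℝ),
      Filter.Tendsto (fun n => ∫ x, f x ∂(ρseq n)) Filter.atTop (nhds (∫ x, f x ∂ρ))) :
    Filter.Tendsto (fun n => discrepancy (ρseq n)) Filter.atTop (nhds (discrepancy ρ)) := by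
  set P : ℕ → ProbabilityMeasure (AddCircle (1 : ℝ)) := fun n => ⟨ρseq n, inferInstance⟩ with hPdef
  set Q : ProbabilityMeasure (AddCircle (1 : ℝ)) := ⟨ρ, inferInstance⟩ with hQdef
  have hP : Filter.Tendsto P Filter.atTop (𝓝 Q) := by
    rw [ProbabilityMeasure.tendsto_iff_forall_integral_tendsto]
    intro f
    exact hweak f.toContinuousMap
  have hLP : Filter.Tendsto
      (fun n => (LevyProkhorov.probabilityMeasureHomeomorph (Ω := AddCircle (1 : ℝ))) (P n))
      Filter.atTop (𝓝 ((LevyProkhorov.probabilityMeasureHomeomorph (Ω := AddCircle (1 : ℝ))) Q)) :=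
    ((LevyProkhorov.probabilityMeasureHomeomorph.continuous.tendsto Q).comp hP)
  rw [Metric.tendsto_atTop]
  intro ε hε
  obtain ⟨N, hN⟩ := Metric.tendsto_atTop.mp hLP (ε / 4) (by linarith)
  refine ⟨N, fun n hn => ?_⟩
  have hd : levyProkhorovDist (ρseq n) ρ < ε / 4 := hN n hn
  have hedist : levyProkhorovEDist (ρseq n) ρ < ENNReal.ofReal (ε / 4) := by
    rw [levyProkhorovDist] at hd
    exact (ENNReal.lt_ofReal_iff_toReal_lt (levyProkhorovEDist_ne_top _ _)).mpr hd
  have h1 : ∀ B : Set (AddCircle (1 : ℝ)), MeasurableSet B →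
      (ρseq n) B ≤ ρ (Metric.thickening (ε / 4) B) + ENNReal.ofReal (ε / 4) := by
    intro B hB
    have := left_measure_le_of_levyProkhorovEDist_lt hedist hB
    rwa [ENNReal.toReal_ofReal (by linarith)] at this
  have h2 : ∀ B : Set (AddCircle (1 : ℝ)), MeasurableSet B →
      ρ B ≤ (ρseq n) (Metric.thickening (ε / 4) B) + ENNReal.ofReal (ε / 4) := by
    intro B hB
    have := right_measure_le_of_levyProkhorovEDist_lt hedist hB
    rwa [ENNReal.toReal_ofReal (by linarith)] at this
  have hA := discrepancy_le_of_thickening (ρseq n) ρ (by linarith) h1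
  have hB := discrepancy_le_of_thickening ρ (ρseq n) (by linarith) h2
  rw [Real.dist_eq, abs_sub_lt_iff]
  constructor <;> linarith
end

section
/- Let U: (0,X) → ℝ be C¹ with U' < 0, and let μ₁, μ₂ be finite signed measures on (0,X) with μ₁((0,X)) = μ₂((0,X)), with μ₁((0,x]) ≤ μ₂((0,x]) for all x ∈ (0,X), with ∫ U d|μ₁| and ∫ U d|μ₂| finite, and with U(x)·(μ₁-μ₂)((0,x]) → 0 as x → 0⁺ and as x → X⁻. Then ∫ U dμ₁ ≤ ∫ U dμ₂, with strict inequality if μ₁ ≠ μ₂. -/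
/-!
Fix `x₀ ∈ S` and put `K(x, t) = 1[x₀ ≤ t] - 1[x ≤ t]`. Then `∫_S U'(t) K(x, t) dt = U x - U x₀`, and
because `U'` has a sign also `∫_S |U'(t) K(x, t)| dt = |U x - U x₀|`. So for a finite measure `ρ`
on `S` against which `U` is integrable, Fubini gives
`∫ (U - U x₀) dρ = ∫_S U'(t) (1[x₀ ≤ t] ρ(ℝ) - ρ(-∞, t]) dt`.

Write `μ₁ - μ₂ = A - B` with the positive measures `A = μ₁⁺ + μ₂⁻`, `B = μ₂⁺ + μ₁⁻` (restricted to
`S`), which have equal mass. Then `∫ U dμ₂ - ∫ U dμ₁ = ∫_S (-U'(t)) (B(-∞, t] - A(-∞, t]) dt ≥ 0`.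
If `μ₁ ≠ μ₂` then `A ≠ B`, so their distribution functions differ at a point of `S`, hence by right
continuity on an interval to its right, where the integrand is positive.
-/

open MeasureTheory

/-- The integral of a function against a signed measure, restricted to a set,
via the Jordan decomposition. -/
noncomputable def signedIntegralOn (μ : SignedMeasure ℝ) (S : Set ℝ) (U : ℝ → ℝ) : ℝ :=
  (∫ x in S, U x ∂μ.toJordanDecomposition.posPart)
    - ∫ x in S, U x ∂μ.toJordanDecomposition.negPart

open Set Filter Topology

noncomputable def heavisideDiff (x₀ x t : ℝ) : ℝ :=
  (if x₀ ≤ t then 1 else 0) - (if x ≤ t then 1 else 0)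

lemma mul_heavisideDiff_of_le (f : ℝ → ℝ) {x₀ x : ℝ} (h : x₀ ≤ x) :
    (fun t => f t * heavisideDiff x₀ x t) = (Ico x₀ x).indicator f := by
  ext t
  simp only [heavisideDiff, indicator, mem_Ico]
  split_ifs <;> grind

lemma mul_heavisideDiff_of_lt (f : ℝ → ℝ) {x₀ x : ℝ} (h : x < x₀) :
    (fun t => f t * heavisideDiff x₀ x t) = -(Ico x x₀).indicator f := by
  ext t
  simp only [heavisideDiff, indicator, mem_Ico, Pi.neg_apply]
  split_ifs <;> grind

lemma integral_heavisideDiff (ρ : Measure ℝ) [IsFiniteMeasure ρ] (x₀ t : ℝ) :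
    ∫ x, heavisideDiff x₀ x t ∂ρ = (if x₀ ≤ t then ρ.real univ else 0) - ρ.real (Iic t) := by
  have h : (fun x => heavisideDiff x₀ x t) =
      fun x => (if x₀ ≤ t then 1 else 0) - (Iic t).indicator 1 x := by
    ext x; simp [heavisideDiff, indicator]
  rw [h, integral_sub (integrable_const _) ((integrable_const 1).indicator measurableSet_Iic),
    integral_indicator_one measurableSet_Iic, integral_const, smul_eq_mul]
  split_ifs <;> simp

lemma measurable_heavisideDiff_uncurry (x₀ : ℝ) :
    Measurable fun p : ℝ × ℝ => heavisideDiff x₀ p.1 p.2 := by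
  unfold heavisideDiff
  exact (Measurable.ite (measurableSet_le measurable_const measurable_snd) measurable_const
    measurable_const).sub (Measurable.ite (measurableSet_le measurable_fst measurable_snd)
    measurable_const measurable_const)

section Deriv

variable {S : Set ℝ} {U U' : ℝ → ℝ} {a b x₀ x : ℝ}

lemma integrable_indicator_Ico_of_continuousOn (hS : S.OrdConnected) (hU' : ContinuousOn U' S)
    (ha : a ∈ S) (hb : b ∈ S) : Integrable ((Ico a b).indicator U') (volume.restrict S) := by
  rw [integrable_indicator_iff measurableSet_Ico]
  exact (((hU'.mono (hS.out ha hb)).integrableOn_Icc).mono_set Ico_subset_Icc_self).restrict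

lemma setIntegral_indicator_Ico_eq_sub (hS : S.OrdConnected) (hU : ∀ x ∈ S, HasDerivAt U (U' x) x)
    (hU' : ContinuousOn U' S) (ha : a ∈ S) (hb : b ∈ S) (hab : a ≤ b) :
    ∫ t in S, (Ico a b).indicator U' t = U b - U a := by
  have hsub : uIcc a b ⊆ S := hS.uIcc_subset ha hb
  rw [setIntegral_indicator measurableSet_Ico,
    inter_eq_right.2 (Ico_subset_Icc_self.trans (hS.out ha hb)), integral_Ico_eq_integral_Ioc,
    ← intervalIntegral.integral_of_le hab]
  exact intervalIntegral.integral_eq_sub_of_hasDerivAt (fun t ht => hU t (hsub ht))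
    (hU'.mono hsub).intervalIntegrable

lemma setIntegral_norm_indicator_Ico_eq_sub (hS : S.OrdConnected)
    (hU : ∀ x ∈ S, HasDerivAt U (U' x) x) (hU' : ContinuousOn U' S)
    (hU'_nonpos : ∀ x ∈ S, U' x ≤ 0) (ha : a ∈ S) (hb : b ∈ S) (hab : a ≤ b) :
    ∫ t in S, ‖(Ico a b).indicator U' t‖ = U a - U b := by
  have hsub : Ico a b ⊆ S := Ico_subset_Icc_self.trans (hS.out ha hb)
  have hnorm :
      EqOn (fun t => ‖(Ico a b).indicator U' t‖) (fun t => -(Ico a b).indicator U' t) S := by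
    intro t _
    by_cases ht : t ∈ Ico a b
    · simp only [indicator_of_mem ht, Real.norm_of_nonpos (hU'_nonpos t (hsub ht))]
    · simp [indicator_of_notMem ht]
  rw [setIntegral_congr_fun hS.measurableSet hnorm, integral_neg,
    setIntegral_indicator_Ico_eq_sub hS hU hU' ha hb hab, neg_sub]

lemma integrable_deriv_mul_heavisideDiff (hS : S.OrdConnected) (hU' : ContinuousOn U' S)
    (hx₀ : x₀ ∈ S) (hx : x ∈ S) :
    Integrable (fun t => U' t * heavisideDiff x₀ x t) (volume.restrict S) := by
  rcases le_or_gt x₀ x with h | h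
  · rw [mul_heavisideDiff_of_le U' h]
    exact integrable_indicator_Ico_of_continuousOn hS hU' hx₀ hx
  · rw [mul_heavisideDiff_of_lt U' h]
    exact (integrable_indicator_Ico_of_continuousOn hS hU' hx hx₀).neg

lemma setIntegral_deriv_mul_heavisideDiff (hS : S.OrdConnected)
    (hU : ∀ x ∈ S, HasDerivAt U (U' x) x) (hU' : ContinuousOn U' S) (hx₀ : x₀ ∈ S) (hx : x ∈ S) :
    ∫ t in S, U' t * heavisideDiff x₀ x t = U x - U x₀ := by
  rcases le_or_gt x₀ x with h | h
  · rw [mul_heavisideDiff_of_le U' h, setIntegral_indicator_Ico_eq_sub hS hU hU' hx₀ hx h]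
  · rw [mul_heavisideDiff_of_lt U' h, Pi.neg_def, integral_neg,
      setIntegral_indicator_Ico_eq_sub hS hU hU' hx hx₀ h.le, neg_sub]

lemma setIntegral_norm_deriv_mul_heavisideDiff (hS : S.OrdConnected)
    (hU : ∀ x ∈ S, HasDerivAt U (U' x) x) (hU' : ContinuousOn U' S)
    (hU'_nonpos : ∀ x ∈ S, U' x ≤ 0) (hx₀ : x₀ ∈ S) (hx : x ∈ S) :
    ∫ t in S, ‖U' t * heavisideDiff x₀ x t‖ = |U x - U x₀| := by
  rcases le_or_gt x₀ x with h | h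
  · have hfun (t : ℝ) : ‖U' t * heavisideDiff x₀ x t‖ = ‖(Ico x₀ x).indicator U' t‖ := by
      simpa using congrArg norm (congrFun (mul_heavisideDiff_of_le U' h) t)
    have h' := setIntegral_norm_indicator_Ico_eq_sub hS hU hU' hU'_nonpos hx₀ hx h
    have hnn : 0 ≤ U x₀ - U x := h' ▸ integral_nonneg fun t => norm_nonneg _
    rw [integral_congr_ae (ae_of_all _ hfun), h', abs_of_nonpos (by linarith), neg_sub]
  · have hfun (t : ℝ) : ‖U' t * heavisideDiff x₀ x t‖ = ‖(Ico x x₀).indicator U' t‖ := by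
      simpa using congrArg norm (congrFun (mul_heavisideDiff_of_lt U' h) t)
    have h' := setIntegral_norm_indicator_Ico_eq_sub hS hU hU' hU'_nonpos hx hx₀ h.le
    have hnn : 0 ≤ U x - U x₀ := h' ▸ integral_nonneg fun t => norm_nonneg _
    rw [integral_congr_ae (ae_of_all _ hfun), h', abs_of_nonneg hnn]

lemma integral_sub_eq_setIntegral_deriv_mul (hS : S.OrdConnected)
    (hU : ∀ x ∈ S, HasDerivAt U (U' x) x) (hU' : ContinuousOn U' S)
    (hU'_nonpos : ∀ x ∈ S, U' x ≤ 0) (hx₀ : x₀ ∈ S)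
    (ρ : Measure ℝ) [IsFiniteMeasure ρ] (hρ : ∀ᵐ x ∂ρ, x ∈ S) (hUρ : Integrable U ρ) :
    Integrable (fun t => U' t * ((if x₀ ≤ t then ρ.real univ else 0) - ρ.real (Iic t)))
      (volume.restrict S) ∧
    ∫ x, (U x - U x₀) ∂ρ =
      ∫ t in S, U' t * ((if x₀ ≤ t then ρ.real univ else 0) - ρ.real (Iic t)) := by
  set g : ℝ → ℝ → ℝ := fun x t => U' t * heavisideDiff x₀ x t
  have hg_meas : AEStronglyMeasurable (Function.uncurry g) (ρ.prod (volume.restrict S)) :=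
    ((hU'.aemeasurable hS.measurableSet).comp_snd.mul
      (measurable_heavisideDiff_uncurry x₀).aemeasurable).aestronglyMeasurable
  have hg : Integrable (Function.uncurry g) (ρ.prod (volume.restrict S)) := by
    refine (integrable_prod_iff hg_meas).2 ⟨hρ.mono fun x hx => ?_, ?_⟩
    · exact integrable_deriv_mul_heavisideDiff hS hU' hx₀ hx
    · refine (hUρ.sub (integrable_const (U x₀))).abs.congr (hρ.mono fun x hx => ?_)
      exact (setIntegral_norm_deriv_mul_heavisideDiff hS hU hU' hU'_nonpos hx₀ hx).symm
  have hinner (t : ℝ) : ∫ x, g x t ∂ρ =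
      U' t * ((if x₀ ≤ t then ρ.real univ else 0) - ρ.real (Iic t)) := by
    rw [integral_const_mul, integral_heavisideDiff]
  refine ⟨hg.integral_prod_right.congr (ae_of_all _ hinner), ?_⟩
  calc ∫ x, (U x - U x₀) ∂ρ = ∫ x, (∫ t in S, g x t) ∂ρ :=
        integral_congr_ae (hρ.mono fun x hx =>
          (setIntegral_deriv_mul_heavisideDiff hS hU hU' hx₀ hx).symm)
    _ = ∫ t in S, ∫ x, g x t ∂ρ := integral_integral_swap hg
    _ = _ := integral_congr_ae (ae_of_all _ hinner)

end Deriv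

section Comparison

variable {S : Set ℝ} {U U' : ℝ → ℝ} {A B : Measure ℝ} [IsFiniteMeasure A] [IsFiniteMeasure B]

lemma tendsto_measureReal_Iic_nhdsGT (μ : Measure ℝ) [IsFiniteMeasure μ] (a : ℝ) :
    Tendsto (fun t => μ.real (Iic t)) (𝓝[>] a) (𝓝 (μ.real (Iic a))) := by
  have hinter : ⋂ r > a, Iic r = Iic a := by
    ext y
    simpa using ⟨le_of_forall_gt_imp_ge_of_dense, fun hya r hr => hya.trans hr.le⟩
  have h := tendsto_measure_biInter_gt (μ := μ) (s := Iic) (a := a)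
    (fun _ _ => measurableSet_Iic.nullMeasurableSet) (fun _ _ _ hij => Iic_subset_Iic.2 hij)
    ⟨a + 1, by linarith, measure_ne_top _ _⟩
  rw [hinter] at h
  exact (ENNReal.tendsto_toReal (measure_ne_top _ _)).comp h

lemma ext_of_measureReal_Iic_of_ordConnected (hS : S.OrdConnected) (hA : ∀ᵐ x ∂A, x ∈ S)
    (hB : ∀ᵐ x ∂B, x ∈ S) (hAB : A.real univ = B.real univ)
    (h : ∀ x ∈ S, A.real (Iic x) = B.real (Iic x)) : A = B := by
  refine Measure.ext_of_Iic A B fun a => ?_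
  rw [← ENNReal.toReal_eq_toReal_iff' (measure_ne_top _ _) (measure_ne_top _ _)]
  change A.real (Iic a) = B.real (Iic a)
  by_cases haS : a ∈ S
  · exact h a haS
  by_cases hbelow : ∃ s ∈ S, s ≤ a
  · obtain ⟨s, hs, hsa⟩ := hbelow
    have hSa : ∀ y ∈ S, y ≤ a := fun y hy =>
      not_lt.1 fun hay => haS (hS.out hs hy ⟨hsa, hay.le⟩)
    have hfull (ρ : Measure ℝ) [IsFiniteMeasure ρ] (hρ : ∀ᵐ x ∂ρ, x ∈ S) :
        ρ.real (Iic a) = ρ.real univ := by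
      have hnull : ρ.real (Ioi a) = 0 := (measureReal_eq_zero_iff (measure_ne_top _ _)).2
        (measure_eq_zero_iff_ae_notMem.2 (hρ.mono fun x hx => not_lt.2 (hSa x hx)))
      rw [← compl_Ioi, measureReal_compl measurableSet_Ioi, hnull, sub_zero]
    rw [hfull A hA, hfull B hB, hAB]
  · push Not at hbelow
    have hnull (ρ : Measure ℝ) [IsFiniteMeasure ρ] (hρ : ∀ᵐ x ∂ρ, x ∈ S) :
        ρ.real (Iic a) = 0 := (measureReal_eq_zero_iff (measure_ne_top _ _)).2
      (measure_eq_zero_iff_ae_notMem.2 (hρ.mono fun x hx => not_le.2 (hbelow x hx)))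
    rw [hnull A hA, hnull B hB]

lemma integral_sub_integral_eq_setIntegral_deriv_mul_sub (hS : S.OrdConnected)
    (hU : ∀ x ∈ S, HasDerivAt U (U' x) x) (hU' : ContinuousOn U' S)
    (hU'_nonpos : ∀ x ∈ S, U' x ≤ 0) {x₀ : ℝ} (hx₀ : x₀ ∈ S) (hA : ∀ᵐ x ∂A, x ∈ S)
    (hB : ∀ᵐ x ∂B, x ∈ S) (hAB : A.real univ = B.real univ) (hUA : Integrable U A)
    (hUB : Integrable U B) :
    Integrable (fun t => U' t * (A.real (Iic t) - B.real (Iic t))) (volume.restrict S) ∧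
    ∫ x, U x ∂B - ∫ x, U x ∂A = ∫ t in S, U' t * (A.real (Iic t) - B.real (Iic t)) := by
  obtain ⟨hintA, heqA⟩ :=
    integral_sub_eq_setIntegral_deriv_mul hS hU hU' hU'_nonpos hx₀ A hA hUA
  obtain ⟨hintB, heqB⟩ :=
    integral_sub_eq_setIntegral_deriv_mul hS hU hU' hU'_nonpos hx₀ B hB hUB
  have hdiff (t : ℝ) :
      U' t * ((if x₀ ≤ t then B.real univ else 0) - B.real (Iic t))
        - U' t * ((if x₀ ≤ t then A.real univ else 0) - A.real (Iic t))
      = U' t * (A.real (Iic t) - B.real (Iic t)) := by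
    rw [hAB]; ring
  refine ⟨(hintB.sub hintA).congr (ae_of_all _ hdiff), ?_⟩
  have hshift (ρ : Measure ℝ) [IsFiniteMeasure ρ] (hUρ : Integrable U ρ) :
      ∫ x, U x ∂ρ = ∫ x, (U x - U x₀) ∂ρ + ρ.real univ * U x₀ := by
    rw [integral_sub hUρ (integrable_const _), integral_const, smul_eq_mul]; ring
  rw [hshift A hUA, hshift B hUB, hAB, add_sub_add_right_eq_sub, heqA, heqB,
    ← integral_sub hintB hintA]
  exact integral_congr_ae (ae_of_all _ hdiff)

theorem integral_le_integral_of_measureReal_Iic_le (hS : S.OrdConnected)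
    (hU : ∀ x ∈ S, HasDerivAt U (U' x) x) (hU' : ContinuousOn U' S)
    (hU'_nonpos : ∀ x ∈ S, U' x ≤ 0) (hA : ∀ᵐ x ∂A, x ∈ S) (hB : ∀ᵐ x ∂B, x ∈ S)
    (hAB : A.real univ = B.real univ) (hcdf : ∀ x ∈ S, A.real (Iic x) ≤ B.real (Iic x))
    (hUA : Integrable U A) (hUB : Integrable U B) :
    ∫ x, U x ∂A ≤ ∫ x, U x ∂B := by
  rcases S.eq_empty_or_nonempty with rfl | ⟨x₀, hx₀⟩
  · simp_all
  obtain ⟨-, heq⟩ := integral_sub_integral_eq_setIntegral_deriv_mul_sub hS hU hU' hU'_nonpos hx₀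
    hA hB hAB hUA hUB
  refine sub_nonneg.1 (heq ▸ setIntegral_nonneg hS.measurableSet fun t ht => ?_)
  exact mul_nonneg_of_nonpos_of_nonpos (hU'_nonpos t ht) (sub_nonpos.2 (hcdf t ht))

theorem integral_lt_integral_of_measureReal_Iic_le (hSo : IsOpen S) (hS : S.OrdConnected)
    (hU : ∀ x ∈ S, HasDerivAt U (U' x) x) (hU' : ContinuousOn U' S)
    (hU'_neg : ∀ x ∈ S, U' x < 0) (hA : ∀ᵐ x ∂A, x ∈ S) (hB : ∀ᵐ x ∂B, x ∈ S)
    (hAB : A.real univ = B.real univ) (hcdf : ∀ x ∈ S, A.real (Iic x) ≤ B.real (Iic x))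
    (hUA : Integrable U A) (hUB : Integrable U B) (hne : A ≠ B) :
    ∫ x, U x ∂A < ∫ x, U x ∂B := by
  obtain ⟨x₁, hx₁, hlt⟩ : ∃ x ∈ S, A.real (Iic x) < B.real (Iic x) := by
    by_contra! h
    exact hne (ext_of_measureReal_Iic_of_ordConnected hS hA hB hAB
      fun x hx => (hcdf x hx).antisymm (h x hx))
  obtain ⟨hint, heq⟩ := integral_sub_integral_eq_setIntegral_deriv_mul_sub hS hU hU'
    (fun x hx => (hU'_neg x hx).le) hx₁ hA hB hAB hUA hUB
  have hright : ∀ᶠ t in 𝓝[>] x₁, t ∈ S ∧ A.real (Iic t) < B.real (Iic t) := by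
    filter_upwards [mem_nhdsWithin_of_mem_nhds (hSo.mem_nhds hx₁),
      (tendsto_measureReal_Iic_nhdsGT A x₁).eventually (gt_mem_nhds hlt), self_mem_nhdsWithin]
      with t ht hAt hxt
    exact ⟨ht, hAt.trans_le (measureReal_mono (Iic_subset_Iic.2 (le_of_lt hxt)))⟩
  obtain ⟨c, hc, hsub⟩ := mem_nhdsGT_iff_exists_Ioo_subset.1 hright
  rw [← sub_pos, heq, setIntegral_pos_iff_support_of_nonneg_ae
    (ae_restrict_of_forall_mem hS.measurableSet fun t ht => mul_nonneg_of_nonpos_of_nonpos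
      (hU'_neg t ht).le (sub_nonpos.2 (hcdf t ht))) hint]
  refine lt_of_lt_of_le ?_ (measure_mono fun t ht => ⟨?_, (hsub ht).1⟩)
  · simpa using hc
  · exact mul_ne_zero (hU'_neg t (hsub ht).1).ne (sub_ne_zero.2 (hsub ht).2.ne)

end Comparison

namespace MeasureTheory.SignedMeasure

variable {α : Type*} [MeasurableSpace α] {μ : SignedMeasure α} {f : α → ℝ} {S : Set α}

lemma sub_apply_eq_measureReal_sub (μ₁ μ₂ : SignedMeasure α) {E : Set α} (hE : MeasurableSet E) :
    μ₁ E - μ₂ E =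
      (μ₁.toJordanDecomposition.posPart + μ₂.toJordanDecomposition.negPart).real E
        - (μ₂.toJordanDecomposition.posPart + μ₁.toJordanDecomposition.negPart).real E := by
  rw [apply_eq_posPart_real_sub_negPart_real _ hE, apply_eq_posPart_real_sub_negPart_real _ hE,
    measureReal_add_apply, measureReal_add_apply]
  ring

lemma integrableOn_posPart (h : IntegrableOn f S μ.totalVariation) :
    IntegrableOn f S μ.toJordanDecomposition.posPart :=
  h.mono_measure (Measure.le_add_right le_rfl)

lemma integrableOn_negPart (h : IntegrableOn f S μ.totalVariation) :
    IntegrableOn f S μ.toJordanDecomposition.negPart :=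
  h.mono_measure (Measure.le_add_left le_rfl)

end MeasureTheory.SignedMeasure

open SignedMeasure in
lemma signedIntegralOn_sub_signedIntegralOn {μ₁ μ₂ : SignedMeasure ℝ} {S : Set ℝ} {U : ℝ → ℝ}
    (h₁ : IntegrableOn U S μ₁.totalVariation) (h₂ : IntegrableOn U S μ₂.totalVariation) :
    signedIntegralOn μ₂ S U - signedIntegralOn μ₁ S U =
      ∫ x in S, U x ∂(μ₂.toJordanDecomposition.posPart + μ₁.toJordanDecomposition.negPart)
        - ∫ x in S, U x ∂(μ₁.toJordanDecomposition.posPart + μ₂.toJordanDecomposition.negPart) := by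
  rw [signedIntegralOn, signedIntegralOn, Measure.restrict_add, Measure.restrict_add,
    integral_add_measure (integrableOn_posPart h₂) (integrableOn_negPart h₁),
    integral_add_measure (integrableOn_posPart h₁) (integrableOn_negPart h₂)]
  ring

lemma isOpen_setOf_pos_and_coe_lt (X : EReal) : IsOpen {x : ℝ | 0 < x ∧ (x : EReal) < X} := by
  rw [show {x : ℝ | 0 < x ∧ (x : EReal) < X} = ((↑) : ℝ → EReal) ⁻¹' Ioo 0 X by
    ext; simp [EReal.coe_pos]]
  exact isOpen_Ioo.preimage continuous_coe_real_ereal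

lemma ordConnected_setOf_pos_and_coe_lt (X : EReal) :
    OrdConnected {x : ℝ | 0 < x ∧ (x : EReal) < X} :=
  ⟨fun _ ha _ hb _ hc => ⟨ha.1.trans_le hc.1, (EReal.coe_le_coe_iff.2 hc.2).trans_lt hb.2⟩⟩

lemma Iic_inter_setOf_pos_and_coe_lt {X : EReal} {x : ℝ} (hx : (x : EReal) < X) :
    Iic x ∩ {y : ℝ | 0 < y ∧ (y : EReal) < X} = Ioc 0 x := by
  ext y
  simp only [mem_inter_iff, mem_Iic, mem_ofPred_eq, mem_Ioc]
  exact ⟨fun ⟨hyx, hy, _⟩ => ⟨hy, hyx⟩,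
    fun ⟨hy, hyx⟩ => ⟨hyx, hy, (EReal.coe_le_coe_iff.2 hyx).trans_lt hx⟩⟩

theorem decreasing_weight_comparison_general
    (X : EReal)
    (S : Set ℝ) (hS : S = {x : ℝ | 0 < x ∧ (x : EReal) < X})
    (U U' : ℝ → ℝ)
    (hU : ∀ x ∈ S, HasDerivAt U (U' x) x)
    (hU'cont : ContinuousOn U' S)
    (hU'neg : ∀ x ∈ S, U' x < 0)
    (μ₁ μ₂ : SignedMeasure ℝ)
    (htot : μ₁ S = μ₂ S)
    (hcum : ∀ x ∈ S, μ₁ (Set.Ioc 0 x) ≤ μ₂ (Set.Ioc 0 x))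
    (hint₁ : IntegrableOn U S μ₁.totalVariation)
    (hint₂ : IntegrableOn U S μ₂.totalVariation) :
    signedIntegralOn μ₁ S U ≤ signedIntegralOn μ₂ S U ∧
    ((∃ A : Set ℝ, MeasurableSet A ∧ A ⊆ S ∧ μ₁ A ≠ μ₂ A) →
      signedIntegralOn μ₁ S U < signedIntegralOn μ₂ S U) := by
  have hSo : IsOpen S := hS ▸ isOpen_setOf_pos_and_coe_lt X
  have hSc : S.OrdConnected := hS ▸ ordConnected_setOf_pos_and_coe_lt X
  set A := (μ₁.toJordanDecomposition.posPart + μ₂.toJordanDecomposition.negPart).restrict S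
  set B := (μ₂.toJordanDecomposition.posPart + μ₁.toJordanDecomposition.negPart).restrict S
  have hsub (E : Set ℝ) (hE : MeasurableSet E) :
      μ₁ (E ∩ S) - μ₂ (E ∩ S) = A.real E - B.real E := by
    rw [measureReal_restrict_apply hE, measureReal_restrict_apply hE]
    exact SignedMeasure.sub_apply_eq_measureReal_sub μ₁ μ₂ (hE.inter hSc.measurableSet)
  have hAB : A.real univ = B.real univ := by
    linarith [hsub univ MeasurableSet.univ, univ_inter S ▸ htot]
  have hcdf (x : ℝ) (hx : x ∈ S) : A.real (Iic x) ≤ B.real (Iic x) := by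
    have hIic : Iic x ∩ S = Ioc 0 x := hS ▸ Iic_inter_setOf_pos_and_coe_lt (hS ▸ hx).2
    linarith [hsub (Iic x) measurableSet_Iic, hIic ▸ hcum x hx]
  have hA : ∀ᵐ x ∂A, x ∈ S := ae_restrict_mem hSc.measurableSet
  have hB : ∀ᵐ x ∂B, x ∈ S := ae_restrict_mem hSc.measurableSet
  have hUA : Integrable U A := (SignedMeasure.integrableOn_posPart hint₁).add_measure
    (SignedMeasure.integrableOn_negPart hint₂)
  have hUB : Integrable U B := (SignedMeasure.integrableOn_posPart hint₂).add_measure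
    (SignedMeasure.integrableOn_negPart hint₁)
  rw [← sub_nonneg, ← sub_pos, signedIntegralOn_sub_signedIntegralOn hint₁ hint₂, sub_nonneg,
    sub_pos]
  refine ⟨integral_le_integral_of_measureReal_Iic_le hSc hU hU'cont (fun x hx => (hU'neg x hx).le)
    hA hB hAB hcdf hUA hUB, fun ⟨E, hE, hES, hne⟩ => ?_⟩
  refine integral_lt_integral_of_measureReal_Iic_le hSo hSc hU hU'cont hU'neg hA hB hAB hcdf hUA
    hUB fun hAB' : A = B => hne (sub_eq_zero.1 ?_)
  rw [← inter_eq_left.2 hES, hsub E hE, hAB', sub_self]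

/-- Comparison principle for a strictly decreasing C¹ weight `U` on `(0,X)`
(`X ∈ (0,∞]`): if signed measures `μ₁, μ₂` on `(0,X)` have equal total mass,
`μ₁((0,x]) ≤ μ₂((0,x])` for all `x ∈ (0,X)`, `U` is integrable against `|μ₁|`,`|μ₂|`,
and `U(x)·(μ₁-μ₂)((0,x]) → 0` at both endpoints, then `∫ U dμ₁ ≤ ∫ U dμ₂`,
strictly if `μ₁ ≠ μ₂` on `(0,X)`. -/
theorem decreasing_weight_comparison
    (X : EReal) (hX : 0 < X)
    (S : Set ℝ) (hS : S = {x : ℝ | 0 < x ∧ (x : EReal) < X})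
    (U U' : ℝ → ℝ)
    (hU : ∀ x ∈ S, HasDerivAt U (U' x) x)
    (hU'cont : ContinuousOn U' S)
    (hU'neg : ∀ x ∈ S, U' x < 0)
    (μ₁ μ₂ : SignedMeasure ℝ)
    (hsupp₁ : ∀ A : Set ℝ, MeasurableSet A → A ⊆ Sᶜ → μ₁ A = 0)
    (hsupp₂ : ∀ A : Set ℝ, MeasurableSet A → A ⊆ Sᶜ → μ₂ A = 0)
    (htot : μ₁ S = μ₂ S)
    (hcum : ∀ x ∈ S, μ₁ (Set.Ioc 0 x) ≤ μ₂ (Set.Ioc 0 x))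
    (hint₁ : IntegrableOn U S μ₁.totalVariation)
    (hint₂ : IntegrableOn U S μ₂.totalVariation)
    (hlim0 : Filter.Tendsto (fun x : ℝ => U x * (μ₁ (Set.Ioc 0 x) - μ₂ (Set.Ioc 0 x)))
      (nhdsWithin 0 (Set.Ioi 0)) (nhds 0))
    (hlimX : Filter.Tendsto (fun x : ℝ => U x * (μ₁ (Set.Ioc 0 x) - μ₂ (Set.Ioc 0 x)))
      (Filter.comap (fun x : ℝ => (x : EReal)) (nhdsWithin X (Set.Iio X))) (nhds 0)) :
    signedIntegralOn μ₁ S U ≤ signedIntegralOn μ₂ S U ∧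
    ((∃ A : Set ℝ, MeasurableSet A ∧ A ⊆ S ∧ μ₁ A ≠ μ₂ A) →
      signedIntegralOn μ₁ S U < signedIntegralOn μ₂ S U) :=
  decreasing_weight_comparison_general X S hS U U' hU hU'cont hU'neg μ₁ μ₂ htot hcum hint₁ hint₂
end

section
/- The function R ↦ √(R²-1)·log(R + √(R²-1)) - R has a unique root R_c in (1,∞), and R_c ∈ (1.81, 1.82). -/
open Real Set

noncomputable def fRc (R : ℝ) : ℝ :=
  Real.sqrt (R ^ 2 - 1) * Real.log (R + Real.sqrt (R ^ 2 - 1)) - R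

lemma sqrt_pos_of_one_lt {x : ℝ} (hx : 1 < x) : 0 < Real.sqrt (x ^ 2 - 1) :=
  Real.sqrt_pos.mpr (by nlinarith)

lemma hasDerivAt_fRc {x : ℝ} (hx : 1 < x) :
    HasDerivAt fRc (x * Real.log (x + Real.sqrt (x ^ 2 - 1)) / Real.sqrt (x ^ 2 - 1)) x := by
  have hs := sqrt_pos_of_one_lt hx
  set s := Real.sqrt (x ^ 2 - 1) with hsdef
  have hsne : s ≠ 0 := ne_of_gt hs
  have hx2 : (x:ℝ) ^ 2 - 1 ≠ 0 := by nlinarith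
  have harg : 0 < x + s := by linarith
  have h1 : HasDerivAt (fun R : ℝ => R ^ 2 - 1) (2 * x) x := by
    simpa using ((hasDerivAt_pow 2 x).sub_const 1)
  have h2 : HasDerivAt (fun R : ℝ => Real.sqrt (R ^ 2 - 1)) (x / s) x := by
    have := (Real.hasDerivAt_sqrt hx2).comp x h1
    convert this using 1
    iterate 3 rfl
    rw [← hsdef]
    field_simp
  have h3 : HasDerivAt (fun R : ℝ => R + Real.sqrt (R ^ 2 - 1)) (1 + x / s) x :=
    (hasDerivAt_id x).add h2
  have h4 : HasDerivAt (fun R : ℝ => Real.log (R + Real.sqrt (R ^ 2 - 1)))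
      ((1 + x / s) / (x + s)) x := by
    have := (Real.hasDerivAt_log (ne_of_gt harg)).comp x h3
    convert this using 1
    iterate 3 rfl
    ring
  have h5 : HasDerivAt fRc
      (x / s * Real.log (x + s) + s * ((1 + x / s) / (x + s)) - 1) x :=
    (h2.mul h4).sub (hasDerivAt_id x)
  convert h5 using 1
  have : s * ((1 + x / s) / (x + s)) = 1 := by
    field_simp
    ring
  rw [this]
  rw [add_sub_cancel_right]
  ring

lemma fRc_strictMono : StrictMonoOn fRc (Ioi 1) := by
  apply strictMonoOn_of_deriv_pos (convex_Ioi 1)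
  · intro x hx
    have hx : (1:ℝ) < x := hx
    exact (hasDerivAt_fRc hx).continuousAt.continuousWithinAt
  · intro x hx
    rw [interior_Ioi] at hx
    have hx : (1:ℝ) < x := hx
    rw [(hasDerivAt_fRc hx).deriv]
    have hs := sqrt_pos_of_one_lt hx
    have hlog : 0 < Real.log (x + Real.sqrt (x ^ 2 - 1)) :=
      Real.log_pos (by linarith)
    positivity

lemma fRc_neg : fRc 1.81 < 0 := by
  have h281 : (1.81:ℝ)^2 - 1 = 2.2761 := by norm_num
  have hs_hi : Real.sqrt 2.2761 ≤ 1.50868 :=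
    Real.sqrt_le_iff.mpr ⟨by norm_num, by norm_num⟩
  have hs_pos : 0 < Real.sqrt 2.2761 := Real.sqrt_pos.mpr (by norm_num)
  have hexp : (3.31868:ℝ) < Real.exp (1.81/1.50868) := by
    have h := Real.sum_le_exp_of_nonneg (x := 1.81/1.50868) (by norm_num) 11
    refine lt_of_lt_of_le ?_ h
    norm_num [Finset.sum_range_succ, Nat.factorial]
  have hlog : Real.log 3.31868 < 1.81/1.50868 :=
    (Real.log_lt_iff_lt_exp (by norm_num)).mpr hexp
  have hlogpos : 0 ≤ Real.log (1.81 + Real.sqrt 2.2761) :=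
    Real.log_nonneg (by nlinarith)
  have hmul : Real.sqrt 2.2761 * Real.log (1.81 + Real.sqrt 2.2761)
      ≤ 1.50868 * Real.log 3.31868 := by
    apply mul_le_mul hs_hi ?_ hlogpos (by norm_num)
    apply Real.log_le_log (by positivity)
    linarith
  have : (1.50868:ℝ) * Real.log 3.31868 < 1.81 := by
    have := mul_lt_mul_of_pos_left hlog (by norm_num : (0:ℝ) < 1.50868)
    calc (1.50868:ℝ) * Real.log 3.31868 < 1.50868 * (1.81/1.50868) := this
    _ = 1.81 := by norm_num
  unfold fRc
  rw [h281]
  linarith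

lemma fRc_pos : 0 < fRc 1.82 := by
  have h282 : (1.82:ℝ)^2 - 1 = 2.3124 := by norm_num
  have hs_lo : (1.52065:ℝ) ≤ Real.sqrt 2.3124 :=
    (Real.le_sqrt (by norm_num) (by norm_num)).mpr (by norm_num)
  have hhalf : Real.exp (0.91/1.52065) ≤ 1.8277 := by
    have h := Real.exp_bound' (x := 0.91/1.52065) (by norm_num) (by norm_num)
      (n := 6) (by norm_num)
    refine h.trans ?_
    norm_num [Finset.sum_range_succ, Nat.factorial]
  have hexp : Real.exp (1.82/1.52065) < 3.34065 := by
    have heq : (1.82/1.52065:ℝ) = 0.91/1.52065 + 0.91/1.52065 := by norm_num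
    rw [heq, Real.exp_add]
    nlinarith [Real.exp_pos (0.91/1.52065)]
  have hlog : 1.82/1.52065 < Real.log 3.34065 :=
    (Real.lt_log_iff_exp_lt (by norm_num)).mpr hexp
  have hlogpos : (0:ℝ) ≤ Real.log 3.34065 := by
    apply Real.log_nonneg; norm_num
  have hmul : (1.52065:ℝ) * Real.log 3.34065
      ≤ Real.sqrt 2.3124 * Real.log (1.82 + Real.sqrt 2.3124) := by
    apply mul_le_mul hs_lo ?_ hlogpos (by positivity)
    apply Real.log_le_log (by norm_num)
    linarith
  have : (1.82:ℝ) < 1.52065 * Real.log 3.34065 := by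
    have := mul_lt_mul_of_pos_left hlog (by norm_num : (0:ℝ) < 1.52065)
    calc (1.82:ℝ) = 1.52065 * (1.82/1.52065) := by norm_num
    _ < 1.52065 * Real.log 3.34065 := this
  unfold fRc
  rw [h282]
  linarith

lemma fRc_continuousOn : ContinuousOn fRc (Icc 1.81 1.82) := by
  have h1 : Continuous (fun R : ℝ => Real.sqrt (R ^ 2 - 1)) :=
    ((continuous_pow 2).sub continuous_const).sqrt
  apply ContinuousOn.sub ?_ continuous_id.continuousOn
  apply ContinuousOn.mul h1.continuousOn
  apply ContinuousOn.log ((continuous_id.add h1).continuousOn)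
  intro x hx
  have := Real.sqrt_nonneg (x ^ 2 - 1)
  have : (1.81:ℝ) ≤ x := hx.1
  have hp : 0 < x + Real.sqrt (x ^ 2 - 1) := by linarith
  exact hp.ne'

/-- The function `R ↦ √(R²-1)·log(R+√(R²-1)) - R` has a unique root `R_c` in `(1,∞)`,
and `R_c ∈ (1.81, 1.82)`. -/
theorem unique_root_Rc :
    ∃ Rc : ℝ, (1.81 < Rc ∧ Rc < 1.82) ∧
      Real.sqrt (Rc ^ 2 - 1) * Real.log (Rc + Real.sqrt (Rc ^ 2 - 1)) - Rc = 0 ∧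
      ∀ R : ℝ, 1 < R →
        Real.sqrt (R ^ 2 - 1) * Real.log (R + Real.sqrt (R ^ 2 - 1)) - R = 0 → R = Rc := by
  have hivt := intermediate_value_Ioo (by norm_num : (1.81:ℝ) ≤ 1.82) fRc_continuousOn
  obtain ⟨Rc, hRcmem, hfRc⟩ := hivt ⟨fRc_neg, fRc_pos⟩
  refine ⟨Rc, ⟨hRcmem.1, hRcmem.2⟩, hfRc, ?_⟩
  intro R hR hfR
  have hRc1 : (1:ℝ) < Rc := by linarith [hRcmem.1]
  exact fRc_strictMono.injOn (Set.mem_Ioi.mpr hR) (Set.mem_Ioi.mpr hRc1)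
    (by show fRc R = fRc Rc
        have hfR' : fRc R = 0 := hfR
        rw [hfR', hfRc])
end

section
/- For R > 1, the principal value integral Φ(0,R) = p.v.∫₀^R x√(R²-x²)/(x²-1) dx equals √(R²-1)·log(R + √(R²-1)) - R. -/
set_option maxHeartbeats 1000000 in
/-- For `R > 1`, the principal value integral `p.v. ∫₀^R x√(R²-x²)/(x²-1) dx`
(principal value at the singularity `x = 1`) equals `√(R²-1)·log(R+√(R²-1)) - R`. -/
theorem pv_integral_eval (R : ℝ) (hR : 1 < R) :
    Filter.Tendsto (fun ε : ℝ =>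
        (∫ x in (0:ℝ)..(1 - ε), x * Real.sqrt (R ^ 2 - x ^ 2) / (x ^ 2 - 1)) +
        ∫ x in (1 + ε)..R, x * Real.sqrt (R ^ 2 - x ^ 2) / (x ^ 2 - 1))
      (nhdsWithin 0 (Set.Ioi 0))
      (nhds (Real.sqrt (R ^ 2 - 1) * Real.log (R + Real.sqrt (R ^ 2 - 1)) - R)) := by
  set a := Real.sqrt (R ^ 2 - 1) with ha
  have hR0 : 0 < R := lt_trans one_pos hR
  have hR21 : 0 < R ^ 2 - 1 := by nlinarith
  have ha0 : 0 < a := Real.sqrt_pos.mpr hR21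
  have ha2 : a ^ 2 = R ^ 2 - 1 := Real.sq_sqrt hR21.le
  set f : ℝ → ℝ := fun x => x * Real.sqrt (R ^ 2 - x ^ 2) / (x ^ 2 - 1) with hf
  set F : ℝ → ℝ := fun x => Real.sqrt (R ^ 2 - x ^ 2)
      - a * Real.log (a + Real.sqrt (R ^ 2 - x ^ 2))
      + a / 2 * Real.log (x ^ 2 - 1) with hF
  -- the derivative of F
  have hderiv : ∀ x : ℝ, x ^ 2 < R ^ 2 → x ^ 2 ≠ 1 → HasDerivAt F (f x) x := by
    intro x hx1 hx2
    have hpos : 0 < R ^ 2 - x ^ 2 := by linarith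
    set u := Real.sqrt (R ^ 2 - x ^ 2) with hu
    have hu0 : 0 < u := Real.sqrt_pos.mpr hpos
    have hu2 : u ^ 2 = R ^ 2 - x ^ 2 := Real.sq_sqrt hpos.le
    have hau : a + u ≠ 0 := by positivity
    have hx21 : x ^ 2 - 1 ≠ 0 := sub_ne_zero.mpr hx2
    have h1 : HasDerivAt (fun y : ℝ => R ^ 2 - y ^ 2) (-(2 * x)) x := by
      simpa using (hasDerivAt_pow 2 x).const_sub (R ^ 2)
    have h2 : HasDerivAt (fun y : ℝ => Real.sqrt (R ^ 2 - y ^ 2))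
        (-(2 * x) / (2 * u)) x := h1.sqrt (by positivity)
    have h3 : HasDerivAt (fun y : ℝ => Real.log (a + Real.sqrt (R ^ 2 - y ^ 2)))
        ((-(2 * x) / (2 * u)) / (a + u)) x := by
      simpa using ((hasDerivAt_const x a).add h2).log hau
    have h4 : HasDerivAt (fun y : ℝ => Real.log (y ^ 2 - 1))
        ((2 * x) / (x ^ 2 - 1)) x := by
      have := ((hasDerivAt_pow 2 x).sub_const 1).log hx21
      simpa using this
    have h5 := (h2.sub (h3.const_mul a)).add (h4.const_mul (a / 2))
    convert h5 using 1
    case e'_4 => rfl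
    case e'_5 => rfl
    case e'_8 => rfl
    have haux : x ^ 2 - 1 = (a - u) * (a + u) := by nlinarith
    have hmu : a - u ≠ 0 := by
      intro h; rw [h, zero_mul] at haux; exact hx21 haux
    show x * u / (x ^ 2 - 1) = _
    rw [haux]
    field_simp
    ring
  -- continuity of F away from x² = 1
  have hFcont : ∀ x : ℝ, x ^ 2 ≠ 1 → ContinuousAt F x := by
    intro x hx
    have hs : ContinuousAt (fun y : ℝ => Real.sqrt (R ^ 2 - y ^ 2)) x := by
      exact (Real.continuous_sqrt.comp (by continuity)).continuousAt
    have hs2 : ContinuousAt (fun y : ℝ => a + Real.sqrt (R ^ 2 - y ^ 2)) x :=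
      continuousAt_const.add hs
    have hne : a + Real.sqrt (R ^ 2 - x ^ 2) ≠ 0 := by positivity
    have hl1 : ContinuousAt (fun y : ℝ => Real.log (a + Real.sqrt (R ^ 2 - y ^ 2))) x :=
      ContinuousAt.log hs2 hne
    have hl2 : ContinuousAt (fun y : ℝ => Real.log (y ^ 2 - 1)) x :=
      ContinuousAt.log (((continuous_pow 2).sub continuous_const).continuousAt)
        (sub_ne_zero.mpr hx)
    exact (hs.sub (continuousAt_const.mul hl1)).add (continuousAt_const.mul hl2)
  -- integrability of f on intervals avoiding x² = 1
  have hfint : ∀ s t : ℝ, (∀ x ∈ Set.uIcc s t, x ^ 2 - 1 ≠ 0) →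
      IntervalIntegrable f MeasureTheory.volume s t := by
    intro s t h
    apply ContinuousOn.intervalIntegrable
    exact ContinuousOn.div
      ((continuous_id.mul (Real.continuous_sqrt.comp (by continuity))).continuousOn)
      (((continuous_pow 2).sub continuous_const).continuousOn) h
  -- eventual equality with antiderivative differences
  have hev : ∀ᶠ ε in nhdsWithin (0:ℝ) (Set.Ioi 0), ε ∈ Set.Ioo 0 (min 1 (R - 1)) := by
    exact Ioo_mem_nhdsGT_of_mem ⟨le_refl 0, lt_min_iff.mpr ⟨one_pos, by linarith⟩⟩
  have heq : ∀ᶠ ε in nhdsWithin (0:ℝ) (Set.Ioi 0),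
      (∫ x in (0:ℝ)..(1 - ε), f x) +
      (∫ x in (1 + ε)..R, f x) =
      (F (1 - ε) - F (1 + ε)) + (F R - F 0) := by
    filter_upwards [hev] with ε hε
    obtain ⟨hε0, hε1⟩ := hε
    have hε1' : ε < 1 := lt_of_lt_of_le hε1 (min_le_left _ _)
    have hεR : ε < R - 1 := lt_of_lt_of_le hε1 (min_le_right _ _)
    have hI1 : (∫ x in (0:ℝ)..(1 - ε), f x) = F (1 - ε) - F 0 := by
      apply intervalIntegral.integral_eq_sub_of_hasDerivAt
      · intro x hx
        rw [Set.uIcc_of_le (by linarith)] at hx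
        obtain ⟨hx0, hx1⟩ := hx
        apply hderiv
        · nlinarith
        · intro h
          nlinarith [sq_nonneg x, sq_nonneg (1 - ε - x)]
      · apply hfint
        intro x hx
        rw [Set.uIcc_of_le (by linarith)] at hx
        obtain ⟨hx0, hx1⟩ := hx
        nlinarith
    have hI2 : (∫ x in (1 + ε)..R, f x) = F R - F (1 + ε) := by
      apply intervalIntegral.integral_eq_sub_of_hasDeriv_right_of_le (by linarith)
      · intro x hx
        obtain ⟨hx0, hx1⟩ := hx
        exact (hFcont x (by nlinarith)).continuousWithinAt
      · intro x hx
        obtain ⟨hx0, hx1⟩ := hx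
        exact (hderiv x (by nlinarith) (by nlinarith)).hasDerivWithinAt
      · apply hfint
        intro x hx
        rw [Set.uIcc_of_le (by linarith)] at hx
        obtain ⟨hx0, hx1⟩ := hx
        nlinarith
    rw [hI1, hI2]
    ring
  -- the limit of F(1-ε) - F(1+ε)
  set g : ℝ → ℝ := fun ε =>
      (Real.sqrt (R ^ 2 - (1 - ε) ^ 2) - Real.sqrt (R ^ 2 - (1 + ε) ^ 2))
      - a * (Real.log (a + Real.sqrt (R ^ 2 - (1 - ε) ^ 2))
             - Real.log (a + Real.sqrt (R ^ 2 - (1 + ε) ^ 2)))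
      + a / 2 * Real.log ((ε - 2) / (ε + 2)) with hg
  have hgeq : ∀ᶠ ε in nhdsWithin (0:ℝ) (Set.Ioi 0),
      F (1 - ε) - F (1 + ε) = g ε := by
    filter_upwards [hev] with ε hε
    obtain ⟨hε0, hε1⟩ := hε
    have hε1' : ε < 1 := lt_of_lt_of_le hε1 (min_le_left _ _)
    have h1 : (1 - ε) ^ 2 - 1 ≠ 0 := by nlinarith
    have h2 : (1 + ε) ^ 2 - 1 ≠ 0 := by nlinarith
    have hlog : Real.log ((1 - ε) ^ 2 - 1) - Real.log ((1 + ε) ^ 2 - 1)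
        = Real.log ((ε - 2) / (ε + 2)) := by
      rw [← Real.log_div h1 h2]
      congr 1
      rw [div_eq_div_iff h2 (by positivity)]
      ring
    simp only [hF, hg]
    rw [← hlog]
    ring
  have hgt : Filter.Tendsto g (nhdsWithin (0:ℝ) (Set.Ioi 0)) (nhds 0) := by
    have hc : ContinuousAt g 0 := by
      have hs1 : ContinuousAt (fun ε : ℝ => Real.sqrt (R ^ 2 - (1 - ε) ^ 2)) 0 :=
        (Real.continuous_sqrt.comp (by continuity)).continuousAt
      have hs2 : ContinuousAt (fun ε : ℝ => Real.sqrt (R ^ 2 - (1 + ε) ^ 2)) 0 :=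
        (Real.continuous_sqrt.comp (by continuity)).continuousAt
      have hne : ∀ b : ℝ, a + Real.sqrt b ≠ 0 := by
        intro b
        have := Real.sqrt_nonneg b
        positivity
      have hl1 : ContinuousAt (fun ε : ℝ => Real.log (a + Real.sqrt (R ^ 2 - (1 - ε) ^ 2))) 0 :=
        ContinuousAt.log (continuousAt_const.add hs1) (hne _)
      have hl2 : ContinuousAt (fun ε : ℝ => Real.log (a + Real.sqrt (R ^ 2 - (1 + ε) ^ 2))) 0 :=
        ContinuousAt.log (continuousAt_const.add hs2) (hne _)
      have hl3 : ContinuousAt (fun ε : ℝ => Real.log ((ε - 2) / (ε + 2))) 0 := by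
        apply ContinuousAt.log
        · exact ContinuousAt.div ((continuous_id.sub continuous_const).continuousAt)
            ((continuous_id.add continuous_const).continuousAt) (by norm_num)
        · norm_num
      exact ((hs1.sub hs2).sub (continuousAt_const.mul (hl1.sub hl2))).add
        (continuousAt_const.mul hl3)
    have hg0 : g 0 = 0 := by
      simp only [hg]
      norm_num
    have h : Filter.Tendsto g (nhdsWithin (0:ℝ) (Set.Ioi 0)) (nhds (g 0)) :=
      (hc.tendsto).mono_left nhdsWithin_le_nhds
    rwa [hg0] at h
  -- value of F R - F 0
  have hFR : F R = 0 := by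
    simp only [hF]
    rw [show R ^ 2 - R ^ 2 = (0:ℝ) by ring, Real.sqrt_zero, add_zero,
      show R ^ 2 - 1 = a ^ 2 from ha2.symm, Real.log_pow]
    push_cast
    ring
  have hF0 : F 0 = R - a * Real.log (a + R) := by
    simp only [hF]
    rw [show R ^ 2 - 0 ^ 2 = R ^ 2 by ring, Real.sqrt_sq hR0.le,
      show (0:ℝ) ^ 2 - 1 = -1 by norm_num,
      show (-1 : ℝ) = -(1:ℝ) by norm_num, Real.log_neg_eq_log, Real.log_one]
    ring
  -- assemble
  have htarget : a * Real.log (R + a) - R = 0 + (F R - F 0) := by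
    rw [hFR, hF0, add_comm a R]
    ring
  rw [ha] at htarget
  rw [htarget]
  apply Filter.Tendsto.congr' (heq.mono fun ε h => h.symm)
  exact Filter.Tendsto.add (hgt.congr' (hgeq.mono fun ε h => h.symm)) tendsto_const_nhds
end
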